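/- arXiv:0807.0988 — 2 statements merged into one kernel-verified Lean document; each statement's English description precedes it below -/
import Mathlib

section
/- Let t ↦ w_t = R g a_t 0 be a geodesic in the unbounded domain H connecting a point of ∂H to ∞, with lim_{t→∞} w_t = ∞ and lim_{t→-∞} w_t ∈ ∂H. Then Δ'(w_t, w_t) = e^{2t} Δ'(w_0, w_0) for all t ∈ R; if instead lim_{t→-∞} w_t = ∞, then Δ'(w_t, w_t) = e^{-2t} Δ'(w_0, w_0). -/
open Complex Matrix Filter BigOperators

noncomputable section

/-- The signature matrix of the hermitian form of signature `(N,1)` on `ℂ^{N+1}`. -/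
def Jform (N : ℕ) : Matrix (Fin (N + 1)) (Fin (N + 1)) ℂ :=
  Matrix.diagonal fun i => if i = Fin.last N then -1 else 1

/-- Membership in `SU(N,1)`. -/
def inSU (N : ℕ) (g : Matrix (Fin (N + 1)) (Fin (N + 1)) ℂ) : Prop :=
  gᴴ * Jform N * g = Jform N ∧ g.det = 1

/-- The denominator `c z + d` of the Möbius transformation. -/
def denom {N : ℕ} (g : Matrix (Fin (N + 1)) (Fin (N + 1)) ℂ) (z : Fin N → ℂ) : ℂ :=
  g.mulVec (Fin.snoc z 1) (Fin.last N)

/-- The Möbius action `g·z = (Az + b)(cz + d)⁻¹` on the ball in `ℂ^N`. -/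
def act {N : ℕ} (g : Matrix (Fin (N + 1)) (Fin (N + 1)) ℂ) (z : Fin N → ℂ) :
    Fin N → ℂ :=
  fun i => g.mulVec (Fin.snoc z 1) i.castSucc / denom g z

/-- The one-parameter hyperbolic subgroup element `a_t`. -/
def amat (N : ℕ) (t : ℝ) : Matrix (Fin (N + 1)) (Fin (N + 1)) ℂ :=
  Matrix.of fun i j =>
    if i = 0 ∧ j = 0 then (Real.cosh t : ℂ)
    else if i = 0 ∧ j = Fin.last N then (Real.sinh t : ℂ)
    else if i = Fin.last N ∧ j = 0 then (Real.sinh t : ℂ)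
    else if i = Fin.last N ∧ j = Fin.last N then (Real.cosh t : ℂ)
    else if i = j then 1 else 0

/-- The partial Cayley transform `z ↦ ((1+z₁)/(1-z₁), √2 z₂/(1-z₁))` from the ball
in `ℂ^{n+1}` to the unbounded domain `H`. -/
def cayley {n : ℕ} (z : Fin (n + 1) → ℂ) : Fin (n + 1) → ℂ :=
  fun i => if i = 0 then (1 + z 0) / (1 - z 0)
    else (Real.sqrt 2 : ℂ) * z i / (1 - z 0)

/-- The sesqui-polynomial `Δ'(z,w) = z₁ + conj w₁ - w₂* z₂` on
`H ⊆ ℂ^{n+1}` (first coordinate distinguished). -/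
def DeltaP {n : ℕ} (z w : Fin (n + 1) → ℂ) : ℂ :=
  z 0 + (starRingEnd ℂ) (w 0) - ∑ i : Fin n, (starRingEnd ℂ) (w i.succ) * z i.succ

/-- The geodesic `t ↦ R g a_t 0` of the unbounded domain `H ⊆ ℂ^{n+1}`. -/
def geo (n : ℕ) (g : Matrix (Fin (n + 2)) (Fin (n + 2)) ℂ) (t : ℝ) :
    Fin (n + 1) → ℂ :=
  cayley (act (g * amat (n + 1) t) fun _ => 0)


namespace S11
variable {n : ℕ} (g : Matrix (Fin (n+2)) (Fin (n+2)) ℂ)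

/-- the moving vector `g a_t e_last`. -/
def U (t : ℝ) : Fin (n+2) → ℂ := fun i =>
  (Real.sinh t : ℂ) * g i 0 + (Real.cosh t : ℂ) * g i (Fin.last (n+1))

lemma lastne : (Fin.last (n+1) : Fin (n+2)) ≠ 0 := by
  simp [Fin.ext_iff]

lemma snoc_eq : (Fin.snoc (fun _ : Fin (n+1) => (0:ℂ)) 1)
    = fun j => if j = Fin.last (n+1) then (1:ℂ) else 0 := by
  ext j
  refine Fin.lastCases ?_ ?_ j
  · simp
  · intro i
    simp [Fin.snoc_castSucc, (Fin.castSucc_lt_last i).ne]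

lemma amat_last (t : ℝ) (k : Fin (n+2)) : amat (n+1) t k (Fin.last (n+1)) =
    (if k = 0 then (Real.sinh t:ℂ) else 0)
      + (if k = Fin.last (n+1) then (Real.cosh t:ℂ) else 0) := by
  unfold amat
  by_cases h0 : k = 0 <;> by_cases hL : k = Fin.last (n+1) <;>
    simp [h0, hL, lastne, Ne.symm (lastne (n := n))]

/-- the selecting vector `a_t e_last`. -/
def V (t : ℝ) : Fin (n+2) → ℂ := fun k =>
  (if k = 0 then (Real.sinh t:ℂ) else 0)
    + (if k = Fin.last (n+1) then (Real.cosh t:ℂ) else 0)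

lemma U_eq_mulVec (t : ℝ) : U g t = g *ᵥ V (n := n) t := by
  ext i
  simp only [Matrix.mulVec, dotProduct, V, mul_add, mul_ite, mul_zero,
    Finset.sum_add_distrib, Finset.sum_ite_eq' Finset.univ, Finset.mem_univ, if_true]
  unfold U; ring

lemma mulVec_snoc (t : ℝ) :
    (g * amat (n+1) t) *ᵥ (Fin.snoc (fun _ : Fin (n+1) => (0:ℂ)) 1) = U g t := by
  ext i
  rw [snoc_eq]
  simp only [Matrix.mulVec, dotProduct, mul_ite, mul_one, mul_zero]
  rw [Finset.sum_ite_eq' Finset.univ (Fin.last (n+1)) fun j => (g * amat (n+1) t) i j]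
  simp only [Finset.mem_univ, if_true, Matrix.mul_apply]
  rw [Finset.sum_congr rfl fun k _ => by rw [amat_last]]
  simp only [mul_add, mul_ite, mul_zero, Finset.sum_add_distrib,
    Finset.sum_ite_eq' Finset.univ, Finset.mem_univ, if_true]
  unfold U; ring

lemma key (hg : gᴴ * Jform (n+1) * g = Jform (n+1)) (t : ℝ) :
    ∑ j : Fin (n+1), (starRingEnd ℂ) (U g t j.castSucc) * U g t j.castSucc
      = (starRingEnd ℂ) (U g t (Fin.last (n+1))) * U g t (Fin.last (n+1)) - 1 := by
  have h1 : star (U g t) ⬝ᵥ (Jform (n+1) *ᵥ U g t)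
      = star (V (n := n) t) ⬝ᵥ (Jform (n+1) *ᵥ V (n := n) t) := by
    rw [U_eq_mulVec]
    rw [Matrix.star_mulVec, Matrix.mulVec_mulVec, Matrix.dotProduct_mulVec,
      Matrix.vecMul_vecMul, ← Matrix.mul_assoc, hg, ← Matrix.dotProduct_mulVec]
  have h2 : star (V (n := n) t) ⬝ᵥ (Jform (n+1) *ᵥ V (n := n) t) = -1 := by
    have : ∀ k : Fin (n+2), star (V (n := n) t) k * (Jform (n+1) *ᵥ V (n := n) t) k
        = (if k = 0 then ((Real.sinh t:ℂ))^2 else 0)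
          + (if k = Fin.last (n+1) then -((Real.cosh t:ℂ))^2 else 0) := by
      intro k
      simp only [Jform, Matrix.mulVec_diagonal]
      by_cases h0 : k = 0 <;> by_cases hL : k = Fin.last (n+1) <;>
        simp [V, h0, hL, lastne, Ne.symm (lastne (n := n)), Complex.conj_ofReal,
          -Complex.ofReal_sinh, -Complex.ofReal_cosh] <;> ring
    rw [dotProduct, Finset.sum_congr rfl fun k _ => this k]
    simp only [Finset.sum_add_distrib, Finset.sum_ite_eq' Finset.univ, Finset.mem_univ,
      if_true]
    have := Real.cosh_sq_sub_sinh_sq t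
    have : ((Real.cosh t)^2 - (Real.sinh t)^2 : ℂ) = 1 := by exact_mod_cast congrArg (Complex.ofReal) this
    linear_combination -this
  rw [h2] at h1
  have h3 : star (U g t) ⬝ᵥ (Jform (n+1) *ᵥ U g t)
      = ∑ j : Fin (n+1), (starRingEnd ℂ) (U g t j.castSucc) * U g t j.castSucc
        - (starRingEnd ℂ) (U g t (Fin.last (n+1))) * U g t (Fin.last (n+1)) := by
    rw [dotProduct, Fin.sum_univ_castSucc]
    have hterm : ∀ j : Fin (n+1), star (U g t) j.castSucc * (Jform (n+1) *ᵥ U g t) j.castSucc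
        = (starRingEnd ℂ) (U g t j.castSucc) * U g t j.castSucc := by
      intro j
      simp [Jform, Matrix.mulVec_diagonal, (Fin.castSucc_lt_last j).ne, RCLike.star_def]
    have hlast : star (U g t) (Fin.last (n+1)) * (Jform (n+1) *ᵥ U g t) (Fin.last (n+1))
        = -((starRingEnd ℂ) (U g t (Fin.last (n+1))) * U g t (Fin.last (n+1))) := by
      simp [Jform, Matrix.mulVec_diagonal, RCLike.star_def]
    rw [Finset.sum_congr rfl fun j _ => hterm j, hlast]
    ring
  rw [h3] at h1
  linear_combination h1

lemma key_normSq (hg : gᴴ * Jform (n+1) * g = Jform (n+1)) (t : ℝ) :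
    ∑ j : Fin (n+1), Complex.normSq (U g t j.castSucc)
      = Complex.normSq (U g t (Fin.last (n+1))) - 1 := by
  have h := key g hg t
  have h2 : ((∑ j : Fin (n+1), Complex.normSq (U g t j.castSucc) : ℝ) : ℂ)
      = ((Complex.normSq (U g t (Fin.last (n+1))) - 1 : ℝ) : ℂ) := by
    push_cast
    simp only [Complex.normSq_eq_conj_mul_self]
    exact h
  exact_mod_cast h2

lemma UL_ne (hg : gᴴ * Jform (n+1) * g = Jform (n+1)) (t : ℝ) :
    U g t (Fin.last (n+1)) ≠ 0 := by
  intro h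
  have := key_normSq g hg t
  rw [h] at this
  have hnn : (0:ℝ) ≤ ∑ j : Fin (n+1), Complex.normSq (U g t j.castSucc) :=
    Finset.sum_nonneg fun j _ => Complex.normSq_nonneg _
  simp at this
  linarith

lemma D_ne (hg : gᴴ * Jform (n+1) * g = Jform (n+1)) (t : ℝ) :
    U g t (Fin.last (n+1)) - U g t 0 ≠ 0 := by
  intro h
  have hle : Complex.normSq (U g t ((0 : Fin (n+1)).castSucc))
      ≤ ∑ j : Fin (n+1), Complex.normSq (U g t j.castSucc) :=
    Finset.single_le_sum (f := fun j : Fin (n+1) => Complex.normSq (U g t j.castSucc))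
      (fun j _ => Complex.normSq_nonneg _) (Finset.mem_univ _)
  have hk := key_normSq g hg t
  have heq : U g t 0 = U g t (Fin.last (n+1)) := (sub_eq_zero.mp h).symm
  rw [Fin.castSucc_zero, heq] at hle
  linarith

lemma geo_apply (hg : gᴴ * Jform (n+1) * g = Jform (n+1)) (t : ℝ) :
    geo n g t = fun i : Fin (n+1) =>
      (if i = 0 then U g t (Fin.last (n+1)) + U g t 0
        else (Real.sqrt 2 : ℂ) * U g t i.castSucc)
        / (U g t (Fin.last (n+1)) - U g t 0) := by
  have hc := UL_ne g hg t
  have hd := D_ne g hg t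
  have hz : act (g * amat (n+1) t) (fun _ => 0)
      = fun i : Fin (n+1) => U g t i.castSucc / U g t (Fin.last (n+1)) := by
    ext i
    unfold act denom
    rw [mulVec_snoc]
  have h1 : 1 - U g t 0 / U g t (Fin.last (n+1))
      = (U g t (Fin.last (n+1)) - U g t 0) / U g t (Fin.last (n+1)) := by
    field_simp
  have hne : 1 - U g t 0 / U g t (Fin.last (n+1)) ≠ 0 := by
    rw [h1]; exact div_ne_zero hd hc
  ext i
  unfold geo
  rw [hz]
  unfold cayley
  by_cases hi : i = 0 <;> simp only [hi, if_true, if_false, Fin.castSucc_zero]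
  · rw [div_eq_div_iff hne hd]
    field_simp
    try ring
  · rw [h1]
    field_simp
    try ring


lemma conj_ne {z : ℂ} (hz : z ≠ 0) : (starRingEnd ℂ) z ≠ 0 := by
  simpa using hz

lemma deltaP_geo (hg : gᴴ * Jform (n+1) * g = Jform (n+1)) (t : ℝ) :
    DeltaP (geo n g t) (geo n g t)
      = 2 / ((U g t (Fin.last (n+1)) - U g t 0)
          * (starRingEnd ℂ) (U g t (Fin.last (n+1)) - U g t 0)) := by
  have hc := UL_ne g hg t
  have hd := D_ne g hg t
  have hd' := conj_ne hd
  have hsum : ∑ i : Fin n, (starRingEnd ℂ) (U g t ((i.succ).castSucc)) * U g t ((i.succ).castSucc)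
      = (starRingEnd ℂ) (U g t (Fin.last (n+1))) * U g t (Fin.last (n+1)) - 1
        - (starRingEnd ℂ) (U g t 0) * U g t 0 := by
    have hk := key g hg t
    rw [Fin.sum_univ_succ] at hk
    rw [Fin.castSucc_zero] at hk
    linear_combination hk
  rw [DeltaP, geo_apply g hg t]
  simp only [eq_self_iff_true, if_true, Fin.succ_ne_zero, if_false]
  have hterm : ∀ i : Fin n,
      (starRingEnd ℂ) ((Real.sqrt 2 : ℂ) * U g t ((i.succ).castSucc)
          / (U g t (Fin.last (n+1)) - U g t 0))
        * ((Real.sqrt 2 : ℂ) * U g t ((i.succ).castSucc)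
          / (U g t (Fin.last (n+1)) - U g t 0))
      = (2 / ((U g t (Fin.last (n+1)) - U g t 0)
          * (starRingEnd ℂ) (U g t (Fin.last (n+1)) - U g t 0)))
        * ((starRingEnd ℂ) (U g t ((i.succ).castSucc)) * U g t ((i.succ).castSucc)) := by
    intro i
    have h2 : (Real.sqrt 2 : ℂ) * (Real.sqrt 2 : ℂ) = 2 := by
      rw [← Complex.ofReal_mul, Real.mul_self_sqrt (by norm_num)]
      norm_num
    rw [map_div₀, div_mul_div_comm, _root_.map_mul, Complex.conj_ofReal,
      div_mul_eq_mul_div,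
      mul_comm ((starRingEnd ℂ) (U g t (Fin.last (n+1)) - U g t 0))
        (U g t (Fin.last (n+1)) - U g t 0)]
    congr 1
    linear_combination ((starRingEnd ℂ) (U g t ((i.succ).castSucc)) * U g t ((i.succ).castSucc)) * h2
  rw [Finset.sum_congr rfl fun i _ => hterm i, ← Finset.mul_sum, hsum]
  have hd2 : (starRingEnd ℂ) (U g t (Fin.last (n+1))) - (starRingEnd ℂ) (U g t 0) ≠ 0 := by
    rw [← map_sub]; exact hd'
  simp only [map_div₀, map_add, map_sub]
  field_simp
  ring


def pc : Fin (n+2) → ℂ := fun i => (g i 0 + g i (Fin.last (n+1)))/2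
def qc : Fin (n+2) → ℂ := fun i => (g i (Fin.last (n+1)) - g i 0)/2

lemma U_pq (t : ℝ) (i : Fin (n+2)) :
    U g t i = (Real.exp t : ℂ) * pc g i + (Real.exp (-t) : ℂ) * qc g i := by
  unfold U pc qc
  rw [Real.sinh_eq, Real.cosh_eq]
  push_cast
  ring

lemma tendsto_top (hg : gᴴ * Jform (n+1) * g = Jform (n+1))
    (hP : pc g (Fin.last (n+1)) - pc g 0 ≠ 0) :
    ∃ w, Tendsto (geo n g) atTop (nhds w) := by
  set F : ℝ → Fin (n+1) → ℂ := fun s i =>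
    (if i = 0 then (pc g (Fin.last (n+1)) + pc g 0) + (s:ℂ)*(qc g (Fin.last (n+1)) + qc g 0)
      else (Real.sqrt 2:ℂ) * (pc g i.castSucc + (s:ℂ) * qc g i.castSucc))
    / ((pc g (Fin.last (n+1)) - pc g 0) + (s:ℂ)*(qc g (Fin.last (n+1)) - qc g 0)) with hF
  have hgeoF : ∀ t : ℝ, geo n g t = F (Real.exp (-(2*t))) := by
    intro t
    have he : (Real.exp t : ℂ) ≠ 0 := by
      exact_mod_cast Real.exp_ne_zero t
    have hexp : (Real.exp (-t) : ℂ) = (Real.exp t : ℂ) * (Real.exp (-(2*t)) : ℂ) := by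
      rw [← Complex.ofReal_mul, ← Real.exp_add, show t + -(2*t) = -t from by ring]
    have hden : U g t (Fin.last (n+1)) - U g t 0
        = (Real.exp t : ℂ) * ((pc g (Fin.last (n+1)) - pc g 0)
            + ((Real.exp (-(2*t)) : ℝ):ℂ)*(qc g (Fin.last (n+1)) - qc g 0)) := by
      rw [U_pq, U_pq, hexp]; ring
    rw [geo_apply g hg t]
    funext i
    simp only [hF]
    by_cases hi : i = 0 <;> simp only [hi, eq_self_iff_true, if_true, if_false]
    · have hnum : U g t (Fin.last (n+1)) + U g t 0
          = (Real.exp t : ℂ) * ((pc g (Fin.last (n+1)) + pc g 0)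
              + ((Real.exp (-(2*t)) : ℝ):ℂ)*(qc g (Fin.last (n+1)) + qc g 0)) := by
        rw [U_pq, U_pq, hexp]; ring
      rw [hnum, hden, mul_div_mul_left _ _ he]
    · have hnum : (Real.sqrt 2 : ℂ) * U g t i.castSucc
          = (Real.exp t : ℂ) * ((Real.sqrt 2:ℂ) * (pc g i.castSucc
              + ((Real.exp (-(2*t)) : ℝ):ℂ) * qc g i.castSucc)) := by
        rw [U_pq, hexp]; ring
      rw [hnum, hden, mul_div_mul_left _ _ he]
  have hs : Tendsto (fun t : ℝ => Real.exp (-(2*t))) atTop (nhds 0) := by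
    apply Real.tendsto_exp_atBot.comp
    have h1 : Tendsto (fun t : ℝ => 2*t) atTop atTop :=
      tendsto_id.const_mul_atTop two_pos
    exact tendsto_neg_atTop_atBot.comp h1
  have hcont : ∀ i, Tendsto (fun s : ℝ => F s i) (nhds 0) (nhds (F 0 i)) := by
    intro i
    apply ContinuousAt.tendsto
    apply ContinuousAt.div
    · by_cases hi : i = 0 <;> simp only [hF, hi, eq_self_iff_true, if_true, if_false] <;> fun_prop
    · fun_prop
    · simpa using hP
  refine ⟨F 0, ?_⟩
  have hT : Tendsto (fun t : ℝ => F (Real.exp (-(2*t)))) atTop (nhds (F 0)) := by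
    rw [tendsto_pi_nhds]
    intro i
    exact (hcont i).comp hs
  rw [show geo n g = fun t : ℝ => F (Real.exp (-(2*t))) from funext hgeoF]
  exact hT

lemma tendsto_bot (hg : gᴴ * Jform (n+1) * g = Jform (n+1))
    (hQ : qc g (Fin.last (n+1)) - qc g 0 ≠ 0) :
    ∃ w, Tendsto (geo n g) atBot (nhds w) := by
  set F : ℝ → Fin (n+1) → ℂ := fun s i =>
    (if i = 0 then (s:ℂ)*(pc g (Fin.last (n+1)) + pc g 0) + (qc g (Fin.last (n+1)) + qc g 0)
      else (Real.sqrt 2:ℂ) * ((s:ℂ) * pc g i.castSucc + qc g i.castSucc))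
    / ((s:ℂ)*(pc g (Fin.last (n+1)) - pc g 0) + (qc g (Fin.last (n+1)) - qc g 0)) with hF
  have hgeoF : ∀ t : ℝ, geo n g t = F (Real.exp (2*t)) := by
    intro t
    have he : (Real.exp (-t) : ℂ) ≠ 0 := by
      exact_mod_cast Real.exp_ne_zero (-t)
    have hexp : (Real.exp t : ℂ) = (Real.exp (-t) : ℂ) * (Real.exp (2*t) : ℂ) := by
      rw [← Complex.ofReal_mul, ← Real.exp_add, show -t + 2*t = t from by ring]
    have hden : U g t (Fin.last (n+1)) - U g t 0
        = (Real.exp (-t) : ℂ) * (((Real.exp (2*t) : ℝ):ℂ)*(pc g (Fin.last (n+1)) - pc g 0)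
            + (qc g (Fin.last (n+1)) - qc g 0)) := by
      rw [U_pq, U_pq, hexp]; ring
    rw [geo_apply g hg t]
    funext i
    simp only [hF]
    by_cases hi : i = 0 <;> simp only [hi, eq_self_iff_true, if_true, if_false]
    · have hnum : U g t (Fin.last (n+1)) + U g t 0
          = (Real.exp (-t) : ℂ) * (((Real.exp (2*t) : ℝ):ℂ)*(pc g (Fin.last (n+1)) + pc g 0)
              + (qc g (Fin.last (n+1)) + qc g 0)) := by
        rw [U_pq, U_pq, hexp]; ring
      rw [hnum, hden, mul_div_mul_left _ _ he]
    · have hnum : (Real.sqrt 2 : ℂ) * U g t i.castSucc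
          = (Real.exp (-t) : ℂ) * ((Real.sqrt 2:ℂ) * (((Real.exp (2*t) : ℝ):ℂ) * pc g i.castSucc
              + qc g i.castSucc)) := by
        rw [U_pq, hexp]; ring
      rw [hnum, hden, mul_div_mul_left _ _ he]
  have hs : Tendsto (fun t : ℝ => Real.exp (2*t)) atBot (nhds 0) := by
    apply Real.tendsto_exp_atBot.comp
    exact tendsto_id.const_mul_atBot two_pos
  have hcont : ∀ i, Tendsto (fun s : ℝ => F s i) (nhds 0) (nhds (F 0 i)) := by
    intro i
    apply ContinuousAt.tendsto
    apply ContinuousAt.div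
    · by_cases hi : i = 0 <;> simp only [hF, hi, eq_self_iff_true, if_true, if_false] <;> fun_prop
    · fun_prop
    · simpa using hQ
  refine ⟨F 0, ?_⟩
  have hT : Tendsto (fun t : ℝ => F (Real.exp (2*t))) atBot (nhds (F 0)) := by
    rw [tendsto_pi_nhds]
    intro i
    exact (hcont i).comp hs
  rw [show geo n g = fun t : ℝ => F (Real.exp (2*t)) from funext hgeoF]
  exact hT

end S11
/-- Let `t ↦ w_t = R g a_t 0` be a geodesic of the unbounded
domain `H` connecting a boundary point with `∞`. If `w_t → ∞` as `t → ∞` and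
`w_t` converges to a point of `∂H` as `t → -∞`, then
`Δ'(w_t, w_t) = e^{2t} Δ'(w₀, w₀)` for all `t`; if instead `w_t → ∞` as `t → -∞`
and `w_t` converges to a point of `∂H` as `t → ∞`, then
`Δ'(w_t, w_t) = e^{-2t} Δ'(w₀, w₀)`. -/
theorem stmt11 (n : ℕ) (g : Matrix (Fin (n + 2)) (Fin (n + 2)) ℂ)
    (hg : inSU (n + 1) g) :
    ((Tendsto (fun t : ℝ => ‖geo n g t‖) atTop atTop →
      (∃ p : Fin (n + 1) → ℂ, Tendsto (geo n g) atBot (nhds p) ∧ DeltaP p p = 0) →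
      ∀ t : ℝ, DeltaP (geo n g t) (geo n g t) =
        Real.exp (2 * t) * DeltaP (geo n g 0) (geo n g 0)) ∧
    (Tendsto (fun t : ℝ => ‖geo n g t‖) atBot atTop →
      (∃ p : Fin (n + 1) → ℂ, Tendsto (geo n g) atTop (nhds p) ∧ DeltaP p p = 0) →
      ∀ t : ℝ, DeltaP (geo n g t) (geo n g t) =
        Real.exp (-(2 * t)) * DeltaP (geo n g 0) (geo n g 0))) := by
  obtain ⟨hg1, -⟩ := hg
  constructor
  · intro h1 _ t
    have hP : S11.pc g (Fin.last (n+1)) - S11.pc g 0 = 0 := by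
      by_contra hP
      obtain ⟨w, hw⟩ := S11.tendsto_top g hg1 hP
      exact not_tendsto_atTop_of_tendsto_nhds ((continuous_norm.tendsto w).comp hw) h1
    have hQ : S11.qc g (Fin.last (n+1)) - S11.qc g 0 ≠ 0 := by
      intro hq
      apply S11.D_ne g hg1 0
      rw [S11.U_pq, S11.U_pq]
      have h0 : Real.exp (0:ℝ) = 1 := Real.exp_zero
      rw [neg_zero, h0]
      push_cast
      linear_combination hP + hq
    have hDt : ∀ s : ℝ, S11.U g s (Fin.last (n+1)) - S11.U g s 0
        = (Real.exp (-s) : ℂ) * (S11.qc g (Fin.last (n+1)) - S11.qc g 0) := by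
      intro s
      rw [S11.U_pq, S11.U_pq]
      linear_combination ((Real.exp s : ℝ) : ℂ) * hP
    have hQ' := S11.conj_ne hQ
    have hE : (Real.exp (-t) : ℂ) * (Real.exp (-t):ℂ) * (Real.exp (2*t):ℂ) = 1 := by
      rw [← Complex.ofReal_mul, ← Complex.ofReal_mul, ← Real.exp_add, ← Real.exp_add,
        show -t + -t + 2*t = 0 from by ring, Real.exp_zero, Complex.ofReal_one]
    rw [S11.deltaP_geo g hg1 t, S11.deltaP_geo g hg1 0, hDt t, hDt 0, neg_zero,
      Real.exp_zero, Complex.ofReal_one, one_mul, _root_.map_mul, Complex.conj_ofReal]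
    have he : ((Real.exp (-t) : ℝ) : ℂ) ≠ 0 := by exact_mod_cast Real.exp_ne_zero (-t)
    rw [mul_div_assoc', div_eq_div_iff (mul_ne_zero (mul_ne_zero he hQ) (mul_ne_zero he hQ'))
      (mul_ne_zero hQ hQ')]
    linear_combination (-(2 * ((S11.qc g (Fin.last (n+1)) - S11.qc g 0)
      * (starRingEnd ℂ) (S11.qc g (Fin.last (n+1)) - S11.qc g 0)))) * hE
  · intro h1 _ t
    have hQ : S11.qc g (Fin.last (n+1)) - S11.qc g 0 = 0 := by
      by_contra hQ
      obtain ⟨w, hw⟩ := S11.tendsto_bot g hg1 hQ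
      exact not_tendsto_atTop_of_tendsto_nhds ((continuous_norm.tendsto w).comp hw) h1
    have hP : S11.pc g (Fin.last (n+1)) - S11.pc g 0 ≠ 0 := by
      intro hp
      apply S11.D_ne g hg1 0
      rw [S11.U_pq, S11.U_pq]
      have h0 : Real.exp (0:ℝ) = 1 := Real.exp_zero
      rw [neg_zero, h0]
      push_cast
      linear_combination hp + hQ
    have hDt : ∀ s : ℝ, S11.U g s (Fin.last (n+1)) - S11.U g s 0
        = (Real.exp s : ℂ) * (S11.pc g (Fin.last (n+1)) - S11.pc g 0) := by
      intro s
      rw [S11.U_pq, S11.U_pq]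
      linear_combination ((Real.exp (-s) : ℝ) : ℂ) * hQ
    have hP' := S11.conj_ne hP
    have hE : (Real.exp t : ℂ) * (Real.exp t:ℂ) * (Real.exp (-(2*t)):ℂ) = 1 := by
      rw [← Complex.ofReal_mul, ← Complex.ofReal_mul, ← Real.exp_add, ← Real.exp_add,
        show t + t + -(2*t) = 0 from by ring, Real.exp_zero, Complex.ofReal_one]
    rw [S11.deltaP_geo g hg1 t, S11.deltaP_geo g hg1 0, hDt t, hDt 0,
      Real.exp_zero, Complex.ofReal_one, one_mul, _root_.map_mul, Complex.conj_ofReal]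
    have he : ((Real.exp t : ℝ) : ℂ) ≠ 0 := by exact_mod_cast Real.exp_ne_zero t
    rw [mul_div_assoc', div_eq_div_iff (mul_ne_zero (mul_ne_zero he hP) (mul_ne_zero he hP'))
      (mul_ne_zero hP hP')]
    linear_combination (-(2 * ((S11.pc g (Fin.last (n+1)) - S11.pc g 0)
      * (starRingEnd ℂ) (S11.pc g (Fin.last (n+1)) - S11.pc g 0)))) * hE
end
end

section
/- Let t ↦ w_t = R g a_t 0 be a geodesic in H connecting two points of ∂H, parametrized so that Δ'(w_t, w_t) is maximal at t = 0. Then the function t ↦ Δ'(w_t, w_t) is strictly increasing on (-∞,0], strictly decreasing on [0,∞), satisfies Δ'(w_{-t}, w_{-t}) = Δ'(w_t, w_t), and e^{-2|t|} Δ'(w_0,w_0) ≤ Δ'(w_t, w_t) ≤ 4 e^{-2|t|} Δ'(w_0,w_0) for all t ∈ R. -/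
open Complex Matrix Filter BigOperators

noncomputable section

open ComplexConjugate

/-!
In homogeneous coordinates the geodesic is `[sinh t • b + cosh t • c]`, where `b` and `c` are the
first and last columns of `g`, an orthonormal pair for the form `J` of signature `(n+1, 1)`. For
a vector `V` with `⟨V, V⟩_J = -1` the Cayley transform gives `Δ'(w, w) = 2 / |V_last - V_0|²`, and
`V_last - V_0 = (eᵗ Z + e⁻ᵗ W) / 2`, where `Z` and `W` are the same quantities for the null
vectors `c ± b` of the two endpoints. Hence
`Δ'(w_t, w_t) = 8 / (|Z|² e^{2t} + |W|² e^{-2t} + 2 Re (Z W̄))`.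
Maximality at `t = 0` forces `|Z| = |W|`, so the denominator is `α cosh 2t + β` with `α = 2|Z|²`.
Moreover `β ≥ 0` because `Re Δ'(p, q) ≥ 0` for the endpoints `p, q ∈ ∂H`, and `β ≤ α` by
Cauchy–Schwarz; every claim follows from this shape of the function.
-/

def lorentzInner {N : ℕ} (u w : Fin (N + 1) → ℂ) : ℂ := star u ⬝ᵥ Jform N *ᵥ w

lemma lorentzInner_eq_sum {N : ℕ} (u w : Fin (N + 1) → ℂ) :
    lorentzInner u w = ∑ k : Fin N, conj (u k.castSucc) * w k.castSucc
      - conj (u (Fin.last N)) * w (Fin.last N) := by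
  simp [lorentzInner, Jform, mulVec_diagonal, dotProduct, Fin.sum_univ_castSucc,
    (Fin.castSucc_lt_last _).ne, sub_eq_add_neg]

lemma lorentzInner_swap {N : ℕ} (u w : Fin (N + 1) → ℂ) :
    lorentzInner w u = conj (lorentzInner u w) := by
  simp [lorentzInner_eq_sum, mul_comm]

lemma lorentzInner_smul_add_smul {N : ℕ} (a b c d : ℂ) (u w : Fin (N + 1) → ℂ) :
    lorentzInner (a • u + b • w) (c • u + d • w) =
      conj a * c * lorentzInner u u + conj a * d * lorentzInner u w
        + conj b * c * lorentzInner w u + conj b * d * lorentzInner w w := by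
  simp only [lorentzInner, star_add, star_smul, mulVec_add, mulVec_smul, add_dotProduct,
    dotProduct_add, smul_dotProduct, dotProduct_smul, smul_eq_mul]
  simp
  ring

lemma re_lorentzInner_self {N : ℕ} (V : Fin (N + 1) → ℂ) :
    (lorentzInner V V).re = ∑ k : Fin N, normSq (V k.castSucc) - normSq (V (Fin.last N)) := by
  simp [lorentzInner_eq_sum, Complex.re_sum, normSq_apply]

lemma normSq_zero_sub_normSq_last_le {N : ℕ} (V : Fin (N + 2) → ℂ) :
    normSq (V 0) - normSq (V (Fin.last (N + 1))) ≤ (lorentzInner V V).re := by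
  rw [re_lorentzInner_self, Fin.sum_univ_succ]
  have : 0 ≤ ∑ i : Fin N, normSq (V i.succ.castSucc) :=
    Finset.sum_nonneg fun i _ => normSq_nonneg _
  simp only [Fin.castSucc_zero]
  linarith

lemma lorentzInner_col {N : ℕ} {g : Matrix (Fin (N + 1)) (Fin (N + 1)) ℂ}
    (hg : gᴴ * Jform N * g = Jform N) (i j : Fin (N + 1)) :
    lorentzInner (g.col i) (g.col j) = Jform N i j := by
  rw [← hg, Matrix.mul_apply, lorentzInner, dotProduct_mulVec]
  simp [dotProduct, vecMul, Matrix.mul_apply]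

/-- The homogeneous form of the Cayley denominator `1 - z₁`. -/
def cayleyDenom {N : ℕ} (V : Fin (N + 1) → ℂ) : ℂ := V (Fin.last N) - V 0

def cayleyHom {n : ℕ} (V : Fin (n + 2) → ℂ) : Fin (n + 1) → ℂ :=
  cayley fun i => V i.castSucc / V (Fin.last (n + 1))

lemma cayleyDenom_smul_add_smul {N : ℕ} (a b : ℂ) (u w : Fin (N + 1) → ℂ) :
    cayleyDenom (a • u + b • w) = a * cayleyDenom u + b * cayleyDenom w := by
  simp only [cayleyDenom, Pi.add_apply, Pi.smul_apply, smul_eq_mul]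
  ring

lemma cayleyHom_zero {n : ℕ} {V : Fin (n + 2) → ℂ} (hV : V (Fin.last (n + 1)) ≠ 0) :
    cayleyHom V 0 = (V (Fin.last (n + 1)) + V 0) / cayleyDenom V := by
  simp only [cayleyHom, cayley, if_pos, Fin.castSucc_zero]
  rw [one_add_div hV, one_sub_div hV, div_div_div_cancel_right₀ hV, cayleyDenom]

lemma cayleyHom_succ {n : ℕ} {V : Fin (n + 2) → ℂ} (hV : V (Fin.last (n + 1)) ≠ 0)
    (i : Fin n) :
    cayleyHom V i.succ = Real.sqrt 2 * V i.succ.castSucc / cayleyDenom V := by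
  simp only [cayleyHom, cayley, if_neg (Fin.succ_ne_zero i), Fin.castSucc_zero]
  rw [one_sub_div hV, mul_div_assoc', div_div_div_cancel_right₀ hV, cayleyDenom]

lemma deltaP_cayleyHom {n : ℕ} {V W : Fin (n + 2) → ℂ}
    (hV : V (Fin.last (n + 1)) ≠ 0) (hW : W (Fin.last (n + 1)) ≠ 0)
    (hV0 : cayleyDenom V ≠ 0) (hW0 : cayleyDenom W ≠ 0) :
    DeltaP (cayleyHom V) (cayleyHom W) =
      -2 * lorentzInner W V / (cayleyDenom V * conj (cayleyDenom W)) := by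
  have hW0' : conj (cayleyDenom W) ≠ 0 := (map_ne_zero _).2 hW0
  have hsq : (Real.sqrt 2 : ℂ) * Real.sqrt 2 = 2 := by
    rw [← ofReal_mul, Real.mul_self_sqrt zero_le_two, ofReal_ofNat]
  have hsum : ∑ i : Fin n, conj (cayleyHom W i.succ) * cayleyHom V i.succ =
      2 * (∑ i : Fin n, conj (W i.succ.castSucc) * V i.succ.castSucc) /
        (cayleyDenom V * conj (cayleyDenom W)) := by
    rw [Finset.mul_sum, Finset.sum_div]
    refine Finset.sum_congr rfl fun i _ => ?_
    rw [cayleyHom_succ hV, cayleyHom_succ hW, map_div₀, map_mul, conj_ofReal]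
    field_simp
    linear_combination (conj (W i.succ.castSucc) * V i.succ.castSucc) * hsq
  rw [DeltaP, hsum, cayleyHom_zero hV, cayleyHom_zero hW, lorentzInner_eq_sum,
    Fin.sum_univ_succ, map_div₀]
  simp only [cayleyDenom, Fin.castSucc_zero, map_add, map_sub] at *
  field_simp
  ring

lemma deltaP_cayleyHom_self {n : ℕ} {V : Fin (n + 2) → ℂ} (hV : V (Fin.last (n + 1)) ≠ 0)
    (hV0 : cayleyDenom V ≠ 0) :
    DeltaP (cayleyHom V) (cayleyHom V) = -2 * lorentzInner V V / normSq (cayleyDenom V) := by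
  rw [deltaP_cayleyHom hV hV hV0 hV0, mul_conj]

lemma cayleyDenom_ne_zero_of_re_lorentzInner_neg {N : ℕ} {V : Fin (N + 2) → ℂ}
    (hV : (lorentzInner V V).re < 0) : cayleyDenom V ≠ 0 := by
  intro h
  have := normSq_zero_sub_normSq_last_le V
  rw [cayleyDenom, sub_eq_zero] at h
  rw [h, sub_self] at this
  linarith

lemma last_ne_zero_of_re_lorentzInner_nonpos {N : ℕ} {V : Fin (N + 2) → ℂ}
    (hV : (lorentzInner V V).re ≤ 0) (hV0 : cayleyDenom V ≠ 0) : V (Fin.last (N + 1)) ≠ 0 := by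
  intro h
  have := normSq_zero_sub_normSq_last_le V
  rw [h, map_zero, sub_zero] at this
  have h0 : V 0 = 0 := normSq_eq_zero.1 (le_antisymm (this.trans hV) (normSq_nonneg _))
  exact hV0 (by rw [cayleyDenom, h, h0, sub_zero])

lemma deltaP_cayleyHom_self_of_lorentzInner_eq_neg_one {n : ℕ} {V : Fin (n + 2) → ℂ}
    (hV : lorentzInner V V = -1) :
    cayleyDenom V ≠ 0 ∧ DeltaP (cayleyHom V) (cayleyHom V) = ↑(2 / normSq (cayleyDenom V)) := by
  have hre : (lorentzInner V V).re < 0 := by rw [hV]; norm_num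
  have hV0 := cayleyDenom_ne_zero_of_re_lorentzInner_neg hre
  refine ⟨hV0, ?_⟩
  rw [deltaP_cayleyHom_self (last_ne_zero_of_re_lorentzInner_nonpos hre.le hV0) hV0, hV]
  push_cast
  ring

lemma re_deltaP {m : ℕ} (z w : Fin (m + 1) → ℂ) :
    (DeltaP z w).re = (z 0).re + (w 0).re - ∑ i : Fin m, (z i.succ * conj (w i.succ)).re := by
  simp [DeltaP, Complex.re_sum, mul_comm]

lemma re_deltaP_nonneg {m : ℕ} {z w : Fin (m + 1) → ℂ}
    (hz : 0 ≤ (DeltaP z z).re) (hw : 0 ≤ (DeltaP w w).re) : 0 ≤ (DeltaP z w).re := by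
  have hself : ∀ v : Fin (m + 1) → ℂ,
      (DeltaP v v).re = 2 * (v 0).re - ∑ i : Fin m, normSq (v i.succ) := by
    intro v
    simp only [re_deltaP, mul_conj, ofReal_re]
    ring
  have amgm : ∑ i : Fin m, (z i.succ * conj (w i.succ)).re ≤
      (∑ i : Fin m, normSq (z i.succ) + ∑ i : Fin m, normSq (w i.succ)) / 2 := by
    rw [← Finset.sum_add_distrib, Finset.sum_div]
    gcongr with i
    nlinarith [normSq_nonneg (z i.succ - w i.succ), normSq_sub (z i.succ) (w i.succ)]
  rw [hself] at hz hw
  rw [re_deltaP]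
  linarith

lemma re_neg_lorentzInner_div_nonneg {n : ℕ} {u w : Fin (n + 2) → ℂ}
    (hu : (lorentzInner u u).re ≤ 0) (hw : (lorentzInner w w).re ≤ 0)
    (hu0 : cayleyDenom u ≠ 0) (hw0 : cayleyDenom w ≠ 0) :
    0 ≤ (-2 * lorentzInner w u / (cayleyDenom u * conj (cayleyDenom w))).re := by
  have hself : ∀ {V : Fin (n + 2) → ℂ}, (lorentzInner V V).re ≤ 0 → cayleyDenom V ≠ 0 →
      0 ≤ (DeltaP (cayleyHom V) (cayleyHom V)).re := by
    intro V hV hV0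
    rw [deltaP_cayleyHom_self (last_ne_zero_of_re_lorentzInner_nonpos hV hV0) hV0, div_ofReal_re]
    have : 0 ≤ (-2 * lorentzInner V V).re := by simp; linarith
    exact div_nonneg this (normSq_nonneg _)
  rw [← deltaP_cayleyHom (last_ne_zero_of_re_lorentzInner_nonpos hu hu0)
    (last_ne_zero_of_re_lorentzInner_nonpos hw hw0) hu0 hw0]
  exact re_deltaP_nonneg (hself hu hu0) (hself hw hw0)

section LorentzFrame

variable {N : ℕ} {b c : Fin (N + 2) → ℂ}

lemma cayleyDenom_sinh_cosh (t : ℝ) :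
    cayleyDenom ((Real.sinh t : ℂ) • b + (Real.cosh t : ℂ) • c) =
      (Real.exp t * (cayleyDenom c + cayleyDenom b)
        + Real.exp (-t) * (cayleyDenom c - cayleyDenom b)) / 2 := by
  rw [cayleyDenom_smul_add_smul, Real.sinh_eq, Real.cosh_eq]
  push_cast
  ring

lemma lorentzInner_sinh_cosh (hb : lorentzInner b b = 1) (hc : lorentzInner c c = -1)
    (hbc : lorentzInner b c = 0) (t : ℝ) :
    lorentzInner ((Real.sinh t : ℂ) • b + (Real.cosh t : ℂ) • c)
      ((Real.sinh t : ℂ) • b + (Real.cosh t : ℂ) • c) = -1 := by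
  rw [lorentzInner_smul_add_smul, lorentzInner_swap b c, hb, hc, hbc, conj_ofReal, conj_ofReal,
    map_zero]
  have : (Real.cosh t : ℂ) ^ 2 - (Real.sinh t : ℂ) ^ 2 = 1 := by
    exact_mod_cast Real.cosh_sq_sub_sinh_sq t
  linear_combination -this

lemma deltaP_cayleyHom_sinh_cosh (hb : lorentzInner b b = 1) (hc : lorentzInner c c = -1)
    (hbc : lorentzInner b c = 0) (t : ℝ) :
    0 < normSq (Real.exp t * (cayleyDenom c + cayleyDenom b)
        + Real.exp (-t) * (cayleyDenom c - cayleyDenom b)) ∧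
      DeltaP (cayleyHom ((Real.sinh t : ℂ) • b + (Real.cosh t : ℂ) • c))
        (cayleyHom ((Real.sinh t : ℂ) • b + (Real.cosh t : ℂ) • c)) =
      ↑(8 / normSq (Real.exp t * (cayleyDenom c + cayleyDenom b)
        + Real.exp (-t) * (cayleyDenom c - cayleyDenom b))) := by
  obtain ⟨hne, hΔ⟩ :=
    deltaP_cayleyHom_self_of_lorentzInner_eq_neg_one (lorentzInner_sinh_cosh hb hc hbc t)
  rw [cayleyDenom_sinh_cosh] at hne hΔ
  refine ⟨normSq_pos.2 (div_ne_zero_iff.1 hne).1, ?_⟩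
  rw [hΔ, normSq_div, show normSq 2 = 4 by norm_num [normSq_apply]]
  congr 1
  field_simp
  norm_num

lemma re_cayleyDenom_mul_conj_nonneg (hb : lorentzInner b b = 1) (hc : lorentzInner c c = -1)
    (hbc : lorentzInner b c = 0) :
    0 ≤ ((cayleyDenom c + cayleyDenom b) * conj (cayleyDenom c - cayleyDenom b)).re := by
  have hcb : lorentzInner c b = 0 := by rw [lorentzInner_swap, hbc, map_zero]
  -- the null vectors of the two endpoints of the geodesic
  set u : Fin (N + 2) → ℂ := (1 : ℂ) • c + (1 : ℂ) • b
  set w : Fin (N + 2) → ℂ := (1 : ℂ) • c + (-1 : ℂ) • b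
  have hu : cayleyDenom u = cayleyDenom c + cayleyDenom b := by
    rw [cayleyDenom_smul_add_smul]; ring
  have hw : cayleyDenom w = cayleyDenom c - cayleyDenom b := by
    rw [cayleyDenom_smul_add_smul]; ring
  have huu : lorentzInner u u = 0 := by
    rw [lorentzInner_smul_add_smul, hb, hc, hbc, hcb]; simp
  have hww : lorentzInner w w = 0 := by
    rw [lorentzInner_smul_add_smul, hb, hc, hbc, hcb]; simp
  have hwu : lorentzInner w u = -2 := by
    rw [lorentzInner_smul_add_smul, hb, hc, hbc, hcb]; simp; norm_num
  by_cases hZ : cayleyDenom c + cayleyDenom b = 0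
  · simp [hZ]
  by_cases hW : cayleyDenom c - cayleyDenom b = 0
  · simp [hW]
  have key := re_neg_lorentzInner_div_nonneg (by rw [huu, zero_re]) (by rw [hww, zero_re])
    (hu ▸ hZ) (hw ▸ hW)
  rw [hu, hw, hwu] at key
  have hx := normSq_pos.2 (mul_ne_zero hZ ((map_ne_zero (starRingEnd ℂ)).2 hW))
  generalize (cayleyDenom c + cayleyDenom b) * conj (cayleyDenom c - cayleyDenom b) = x at key hx ⊢
  rw [div_re] at key
  norm_num at key
  linarith [(le_div_iff₀ hx).1 key]

end LorentzFrame

lemma amat_col_last (N : ℕ) (t : ℝ) :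
    (amat (N + 1) t).col (Fin.last (N + 1)) =
      (Real.sinh t : ℂ) • Pi.single 0 1 + (Real.cosh t : ℂ) • Pi.single (Fin.last (N + 1)) 1 := by
  have h0L : (0 : Fin (N + 2)) ≠ Fin.last (N + 1) := Fin.last_pos.ne
  ext k
  by_cases hk0 : k = 0
  · subst hk0; simp [amat, h0L]
  by_cases hkL : k = Fin.last (N + 1)
  · subst hkL; simp [amat, h0L.symm]
  simp [amat, hk0, hkL]

lemma geo_eq_cayleyHom (n : ℕ) (g : Matrix (Fin (n + 2)) (Fin (n + 2)) ℂ) (t : ℝ) :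
    geo n g t =
      cayleyHom ((Real.sinh t : ℂ) • g.col 0 + (Real.cosh t : ℂ) • g.col (Fin.last (n + 1))) := by
  have hsnoc : (Fin.snoc (fun _ => 0) 1 : Fin (n + 2) → ℂ) = Pi.single (Fin.last (n + 1)) 1 := by
    ext k
    refine Fin.lastCases ?_ (fun i => ?_) k <;> simp [(Fin.castSucc_lt_last _).ne]
  have hcol : (g * amat (n + 1) t) *ᵥ Fin.snoc (fun _ => 0) 1 =
      (Real.sinh t : ℂ) • g.col 0 + (Real.cosh t : ℂ) • g.col (Fin.last (n + 1)) := by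
    rw [hsnoc, ← mulVec_mulVec, mulVec_single_one, amat_col_last, mulVec_add, mulVec_smul,
      mulVec_smul, mulVec_single_one, mulVec_single_one]
  rw [geo, cayleyHom, ← hcol]
  rfl

lemma normSq_exp_mul_add_exp_neg_mul (Z W : ℂ) (t : ℝ) :
    normSq (Real.exp t * Z + Real.exp (-t) * W) =
      normSq Z * Real.exp (2 * t) + normSq W * Real.exp (-(2 * t)) + 2 * (Z * conj W).re := by
  have hcross : (Real.exp t : ℂ) * Z * conj ((Real.exp (-t) : ℂ) * W) = Z * conj W := by
    rw [map_mul, conj_ofReal, show (Real.exp t : ℂ) * Z * ((Real.exp (-t) : ℂ) * conj W) =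
      ((Real.exp t * Real.exp (-t) : ℝ) : ℂ) * (Z * conj W) by push_cast; ring,
      ← Real.exp_add, add_neg_cancel, Real.exp_zero, ofReal_one, one_mul]
  rw [normSq_add, hcross, normSq_mul, normSq_mul, normSq_ofReal, normSq_ofReal,
    ← Real.exp_add, ← Real.exp_add]
  ring_nf

lemma normSq_eq_of_forall_normSq_add_le {Z W : ℂ}
    (hmin : ∀ t : ℝ, normSq (Z + W) ≤ normSq (Real.exp t * Z + Real.exp (-t) * W)) :
    normSq Z = normSq W := by
  set f : ℝ → ℝ := fun t => normSq (Real.exp t * Z + Real.exp (-t) * W)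
  have hf : f = fun t => normSq Z * Real.exp (2 * t) + normSq W * Real.exp (-(2 * t))
      + 2 * (Z * conj W).re := funext (normSq_exp_mul_add_exp_neg_mul Z W)
  have hloc : IsLocalMin f 0 :=
    IsMinOn.isLocalMin (fun t _ => by simpa [f] using hmin t) Filter.univ_mem
  have hderiv : HasDerivAt f (normSq Z * 2 - normSq W * 2) 0 := by
    rw [hf]
    have h1 := (((hasDerivAt_id' (0 : ℝ)).const_mul 2).exp).const_mul (normSq Z)
    have h2 := (((hasDerivAt_id' (0 : ℝ)).const_mul 2).neg.exp).const_mul (normSq W)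
    exact ((h1.add h2).add_const (2 * (Z * conj W).re)).congr_deriv (by simp; ring)
  linarith [hloc.hasDerivAt_eq_zero hderiv]

section CoshProfile

variable {K a c : ℝ}

lemma strictMonoOn_div_cosh (hK : 0 < K) (ha : 0 < a) (hc : 0 ≤ c) :
    StrictMonoOn (fun t => K / (a * Real.cosh (2 * t) + c)) (Set.Iic 0) := by
  intro s (hs : s ≤ 0) t (ht : t ≤ 0) hst
  have hlt : Real.cosh (2 * t) < Real.cosh (2 * s) := by
    rw [Real.cosh_lt_cosh, abs_of_nonpos (by linarith : 2 * t ≤ 0),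
      abs_of_nonpos (by linarith : 2 * s ≤ 0)]
    linarith
  have := Real.one_le_cosh (2 * t)
  apply div_lt_div_of_pos_left hK (by positivity)
  nlinarith

lemma strictAntiOn_div_cosh (hK : 0 < K) (ha : 0 < a) (hc : 0 ≤ c) :
    StrictAntiOn (fun t => K / (a * Real.cosh (2 * t) + c)) (Set.Ici 0) := by
  intro s (hs : 0 ≤ s) t (ht : 0 ≤ t) hst
  have hlt : Real.cosh (2 * s) < Real.cosh (2 * t) := by
    rw [Real.cosh_lt_cosh, abs_of_nonneg (by linarith : 0 ≤ 2 * s),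
      abs_of_nonneg (by linarith : 0 ≤ 2 * t)]
    linarith
  have := Real.one_le_cosh (2 * s)
  apply div_lt_div_of_pos_left hK (by positivity)
  nlinarith

lemma div_cosh_bounds (hK : 0 < K) (ha : 0 < a) (hc : 0 ≤ c) (hca : c ≤ a) (t : ℝ) :
    Real.exp (-(2 * |t|)) * (K / (a + c)) ≤ K / (a * Real.cosh (2 * t) + c) ∧
      K / (a * Real.cosh (2 * t) + c) ≤ 4 * Real.exp (-(2 * |t|)) * (K / (a + c)) := by
  have hE : 1 ≤ Real.exp (2 * |t|) := Real.one_le_exp (by positivity)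
  rw [Real.exp_neg, ← Real.cosh_abs (2 * t), abs_mul, abs_two, Real.cosh_eq, Real.exp_neg]
  generalize Real.exp (2 * |t|) = E at hE ⊢
  have hE0 : 0 < E := by linarith
  have hEinv : 0 < E⁻¹ := inv_pos.2 hE0
  have hEinv1 : E⁻¹ ≤ 1 := inv_le_one_of_one_le₀ hE
  have hden : 0 < a * ((E + E⁻¹) / 2) + c := by positivity
  constructor
  · rw [show E⁻¹ * (K / (a + c)) = K / (E * (a + c)) by field_simp]
    apply div_le_div_of_nonneg_left hK.le hden
    nlinarith
  · rw [show 4 * E⁻¹ * (K / (a + c)) = K / (E * (a + c) / 4) by field_simp]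
    apply div_le_div_of_nonneg_left hK.le (by positivity)
    nlinarith

end CoshProfile

lemma deltaP_geo_eq_div_cosh (n : ℕ) (g : Matrix (Fin (n + 2)) (Fin (n + 2)) ℂ)
    (hg : gᴴ * Jform (n + 1) * g = Jform (n + 1))
    (hmax : ∀ t : ℝ, (DeltaP (geo n g t) (geo n g t)).re ≤ (DeltaP (geo n g 0) (geo n g 0)).re) :
    ∃ a c : ℝ, 0 < a ∧ 0 ≤ c ∧ c ≤ a ∧
      ∀ t, DeltaP (geo n g t) (geo n g t) = ↑(8 / (a * Real.cosh (2 * t) + c)) := by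
  have h0L : (0 : Fin (n + 2)) ≠ Fin.last (n + 1) := Fin.last_pos.ne
  have hb : lorentzInner (g.col 0) (g.col 0) = 1 := by simp [lorentzInner_col hg, Jform, h0L]
  have hc : lorentzInner (g.col (Fin.last (n + 1))) (g.col (Fin.last (n + 1))) = -1 := by
    simp [lorentzInner_col hg, Jform]
  have hbc : lorentzInner (g.col 0) (g.col (Fin.last (n + 1))) = 0 := by
    simp [lorentzInner_col hg, Jform, h0L]
  have hre := re_cayleyDenom_mul_conj_nonneg hb hc hbc
  have hgeo := deltaP_cayleyHom_sinh_cosh hb hc hbc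
  simp only [← geo_eq_cayleyHom] at hgeo
  generalize cayleyDenom (g.col (Fin.last (n + 1))) + cayleyDenom (g.col 0) = Z at hgeo hre
  generalize cayleyDenom (g.col (Fin.last (n + 1))) - cayleyDenom (g.col 0) = W at hgeo hre
  have hmin : ∀ t : ℝ, normSq (Z + W) ≤ normSq (Real.exp t * Z + Real.exp (-t) * W) := by
    intro t
    have h := hmax t
    rw [(hgeo t).2, (hgeo 0).2, ofReal_re, ofReal_re,
      div_le_div_iff_of_pos_left (by norm_num) (hgeo t).1 (hgeo 0).1] at h
    simpa using h
  have hZW := normSq_eq_of_forall_normSq_add_le hmin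
  have hle : (Z * conj W).re ≤ normSq Z := by
    nlinarith [normSq_sub Z W, normSq_nonneg (Z - W)]
  have hpos : 0 < normSq Z := by
    have h0 := (hgeo 0).1
    simp only [neg_zero, Real.exp_zero, ofReal_one, one_mul, normSq_add] at h0
    linarith
  refine ⟨2 * normSq Z, 2 * (Z * conj W).re, by positivity, by linarith, by linarith, fun t => ?_⟩
  rw [(hgeo t).2, normSq_exp_mul_add_exp_neg_mul, hZW, Real.cosh_eq]
  ring_nf

theorem stmt12_general (n : ℕ) (g : Matrix (Fin (n + 2)) (Fin (n + 2)) ℂ)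
    (hg : inSU (n + 1) g)
    (hmax : ∀ t : ℝ, (DeltaP (geo n g t) (geo n g t)).re ≤
      (DeltaP (geo n g 0) (geo n g 0)).re) :
    StrictMonoOn (fun t : ℝ => (DeltaP (geo n g t) (geo n g t)).re) (Set.Iic 0) ∧
    StrictAntiOn (fun t : ℝ => (DeltaP (geo n g t) (geo n g t)).re) (Set.Ici 0) ∧
    (∀ t : ℝ, DeltaP (geo n g (-t)) (geo n g (-t)) =
      DeltaP (geo n g t) (geo n g t)) ∧
    (∀ t : ℝ,
      Real.exp (-(2 * |t|)) * (DeltaP (geo n g 0) (geo n g 0)).re ≤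
        (DeltaP (geo n g t) (geo n g t)).re ∧
      (DeltaP (geo n g t) (geo n g t)).re ≤
        4 * Real.exp (-(2 * |t|)) * (DeltaP (geo n g 0) (geo n g 0)).re) := by
  obtain ⟨a, c, ha, hc, hca, hΔ⟩ := deltaP_geo_eq_div_cosh n g hg.1 hmax
  simp only [hΔ, ofReal_re, mul_zero, Real.cosh_zero, mul_one]
  exact ⟨strictMonoOn_div_cosh (by norm_num) ha hc, strictAntiOn_div_cosh (by norm_num) ha hc,
    fun t => by rw [mul_neg, Real.cosh_neg], div_cosh_bounds (by norm_num) ha hc hca⟩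

/-- Let `t ↦ w_t = R g a_t 0` be a geodesic of `H` connecting two
points of `∂H`, parametrized so that `Δ'(w_t, w_t)` is maximal at `t = 0`. Then
`t ↦ Δ'(w_t, w_t)` is strictly increasing on `(-∞,0]`, strictly decreasing on
`[0,∞)`, satisfies `Δ'(w_{-t}, w_{-t}) = Δ'(w_t, w_t)` and
`e^{-2|t|} Δ'(w₀,w₀) ≤ Δ'(w_t,w_t) ≤ 4 e^{-2|t|} Δ'(w₀,w₀)` for all `t`. -/
theorem stmt12 (n : ℕ) (g : Matrix (Fin (n + 2)) (Fin (n + 2)) ℂ)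
    (hg : inSU (n + 1) g)
    (hp : ∃ p : Fin (n + 1) → ℂ, Tendsto (geo n g) atTop (nhds p) ∧ DeltaP p p = 0)
    (hq : ∃ q : Fin (n + 1) → ℂ, Tendsto (geo n g) atBot (nhds q) ∧ DeltaP q q = 0)
    (hmax : ∀ t : ℝ, (DeltaP (geo n g t) (geo n g t)).re ≤
      (DeltaP (geo n g 0) (geo n g 0)).re) :
    StrictMonoOn (fun t : ℝ => (DeltaP (geo n g t) (geo n g t)).re) (Set.Iic 0) ∧
    StrictAntiOn (fun t : ℝ => (DeltaP (geo n g t) (geo n g t)).re) (Set.Ici 0) ∧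
    (∀ t : ℝ, DeltaP (geo n g (-t)) (geo n g (-t)) =
      DeltaP (geo n g t) (geo n g t)) ∧
    (∀ t : ℝ,
      Real.exp (-(2 * |t|)) * (DeltaP (geo n g 0) (geo n g 0)).re ≤
        (DeltaP (geo n g t) (geo n g t)).re ∧
      (DeltaP (geo n g t) (geo n g t)).re ≤
        4 * Real.exp (-(2 * |t|)) * (DeltaP (geo n g 0) (geo n g 0)).re) :=
  stmt12_general n g hg hmax
end
end
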